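/- If x ∈ [0,1] is an almost fixed point of κ₂, then κ₂(x) > x. -/

import Mathlib

/-- `u` is a `p/q`-power: `u = x^n ++ y` with `x` nonempty, `y` a prefix of `x`,
`ℓ(u) = p` and `ℓ(x) = q`. -/
def IsPQPower {α : Type*} (u : List α) (p q : ℕ) : Prop :=
  0 < p ∧ 0 < q ∧ u.length = p ∧
    ∃ (x y : List α) (n : ℕ), x ≠ [] ∧ 0 < n ∧ y <+: x ∧ x.length = q ∧
      u = (List.replicate n x).flatten ++ y

/-- `u` is an `s`-power for the rational `s`. -/
def IsPowerOfExp {α : Type*} (u : List α) (s : ℚ) : Prop :=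
  ∃ p q : ℕ, IsPQPower u p q ∧ s = (p : ℚ) / q

/-- the finite word `u` occurs as a (contiguous) subword of the infinite word `w`. -/
def InfOccurs {α : Type*} (u : List α) (w : ℕ → α) : Prop :=
  ∃ i : ℕ, u = (List.range u.length).map fun k => w (i + k)

/-- the finite word `w` contains an `r`-power. -/
def ContainsPowFin {α : Type*} (w : List α) (r : ℚ) : Prop :=
  ∃ u : List α, u <:+: w ∧ ∃ s : ℚ, r ≤ s ∧ IsPowerOfExp u s

/-- the infinite word `w` contains an `r`-power. -/
def ContainsPowInf {α : Type*} (w : ℕ → α) (r : ℚ) : Prop :=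
  ∃ u : List α, InfOccurs u w ∧ ∃ s : ℚ, r ≤ s ∧ IsPowerOfExp u s

open Classical in
/-- critical exponent of a finite word. -/
noncomputable def Efin {α : Type*} (w : List α) : EReal :=
  if w = [] then 0
  else sSup {x : EReal | ∃ r : ℚ, ContainsPowFin w r ∧ x = ((r : ℝ) : EReal)}

/-- critical exponent of an infinite word. -/
noncomputable def Einf {α : Type*} (w : ℕ → α) : EReal :=
  sSup {x : EReal | ∃ r : ℚ, ContainsPowInf w r ∧ x = ((r : ℝ) : EReal)}

/-- concatenation of a finite and an infinite word. -/
def wordCat {α : Type*} (w : List α) (y : ℕ → α) : ℕ → α :=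
  fun n => if h : n < w.length then w[n] else y (n - w.length)

/-- the `k`-th digit of the base-`b` expansion of `x`, choosing for `b`-adic
rationals the expansion whose digits are ultimately `b - 1`. -/
noncomputable def baseDigit (b : ℕ) (x : ℝ) (k : ℕ) : ℕ :=
  if x ≤ 0 then 0
  else (⌈x * b ^ (k + 1)⌉ - b * ⌈x * b ^ k⌉ + ((b : ℤ) - 1)).toNat

/-- the base-`b` critical exponent function `κ_b`, with the convention `1/∞ = 0`. -/
noncomputable def kappaBase (b : ℕ) (x : ℝ) : ℝ :=
  1 / (Einf (baseDigit b x)).toReal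

/-- the `2`-critical exponent function `κ₂`. -/
noncomputable def kappa2 : ℝ → ℝ := kappaBase 2

/-- The Thue–Morse sequence. -/
def tm : ℕ → Fin 2
  | 0 => 0
  | (n + 1) => if (n + 1) % 2 = 0 then tm ((n + 1) / 2) else 1 - tm ((n + 1) / 2)
decreasing_by all_goals omega

/-- the real number whose binary expansion is the Thue–Morse sequence. -/
noncomputable def xtau : ℝ := ∑' i : ℕ, ((tm i : ℕ) : ℝ) / 2 ^ (i + 1)

/-- the left range `R⁻(f,x)`. -/
def leftRange (f : ℝ → ℝ) (x : ℝ) : Set ℝ :=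
  {α : ℝ | ∀ δ > 0, ∃ z ∈ Set.Ioo (x - δ) x, f z = α}

/-- the right range `R⁺(f,x)`. -/
def rightRange (f : ℝ → ℝ) (x : ℝ) : Set ℝ :=
  {α : ℝ | ∀ δ > 0, ∃ z ∈ Set.Ioo x (x + δ), f z = α}

/-! Containing an `r`-power only depends on finitely many digits, and the digits of `z` are
eventually those of `x` as `z → x⁻` and those of the terminating expansion of `x` as `z → x⁺`.
Hence every value that `κ_b` takes arbitrarily close to the left of `x` is at most
`1 / E(w_x) = κ_b(x)`, and every value it takes arbitrarily close to the right is at most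
`1 / E` of the terminating expansion, which is `0` if `x` is `b`-adic and `κ_b(x)` otherwise.
So both ranges lie in `[0, κ_b(x)]`, whose interior is `(0, κ_b(x))`. -/

open Filter Topology

section Words

variable {α : Type*}

lemma containsPowInf_of_run {w : ℕ → α} {i L : ℕ} (hL : 0 < L)
    (h : ∀ j < L, w (i + j) = w i) : ContainsPowInf w L := by
  refine ⟨List.replicate L (w i), ⟨i, ?_⟩, L, le_rfl, L, 1, ?_, by simp⟩
  · refine (List.ext_getElem (by simp) fun j hj _ => ?_).symm
    simpa using h j (by simpa using hj)
  · exact ⟨hL, one_pos, by simp, [w i], [], L, by simp, hL, List.nil_prefix, rfl,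
      by simp [List.flatten_replicate_singleton]⟩

lemma ContainsPowInf.eventually {β : Type*} {l : Filter β} {w : ℕ → α} {ws : β → ℕ → α}
    {r : ℚ} (hws : ∀ k, ∀ᶠ z in l, ws z k = w k) (h : ContainsPowInf w r) :
    ∀ᶠ z in l, ContainsPowInf (ws z) r := by
  obtain ⟨u, ⟨i, hu⟩, hpow⟩ := h
  have hwindow : ∀ᶠ z in l, ∀ k ∈ Finset.range u.length, ws z (i + k) = w (i + k) :=
    (Finset.eventually_all _).2 fun k _ => hws (i + k)
  filter_upwards [hwindow] with z hz
  exact ⟨u, ⟨i, hu.trans <| List.map_congr_left fun k hk =>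
    (hz k (Finset.mem_range.2 (List.mem_range.1 hk))).symm⟩, hpow⟩

lemma le_Einf_of_containsPowInf {w : ℕ → α} {r : ℚ} (h : ContainsPowInf w r) :
    ((r : ℝ) : EReal) ≤ Einf w :=
  le_sSup ⟨r, h, rfl⟩

lemma exists_containsPowInf_gt {w : ℕ → α} {c : ℝ} (h : (c : EReal) < Einf w) :
    ∃ r : ℚ, ContainsPowInf w r ∧ c < r := by
  obtain ⟨_, ⟨r, hr, rfl⟩, hcr⟩ := lt_sSup_iff.1 h
  exact ⟨r, hr, EReal.coe_lt_coe_iff.1 hcr⟩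

lemma one_le_Einf (w : ℕ → α) : 1 ≤ Einf w := by
  simpa using le_Einf_of_containsPowInf (containsPowInf_of_run (w := w) (i := 0) one_pos
    fun j hj => by rw [Nat.lt_one_iff.1 hj])

lemma Einf_eq_top_of_eventually_const {w : ℕ → α} {n : ℕ} {a : α} (h : ∀ k ≥ n, w k = a) :
    Einf w = ⊤ := by
  refine (EReal.eq_top_iff_forall_lt _).2 fun y => ?_
  obtain ⟨L, hL⟩ := exists_nat_gt y
  have hrun : ContainsPowInf w ((L + 1 : ℕ) : ℚ) := containsPowInf_of_run L.succ_pos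
    fun j _ => by rw [h _ (Nat.le_add_right n j), h n le_rfl]
  refine lt_of_lt_of_le ?_ (le_Einf_of_containsPowInf hrun)
  exact EReal.coe_lt_coe_iff.2 (by push_cast; linarith)

end Words

namespace EReal

lemma one_div_toReal_le_one_div {E : EReal} {r : ℝ} (hr : 0 < r) (h : (r : EReal) ≤ E) :
    1 / E.toReal ≤ 1 / r := by
  induction E using EReal.rec with
  | bot => exact absurd h (by simp)
  | coe e => exact one_div_le_one_div_of_le hr (EReal.coe_le_coe_iff.1 h)
  | top => simpa using hr.le

lemma coe_one_div_lt_of_one_div_toReal_lt {E : EReal} {a : ℝ} (hE : 1 ≤ E) (ha : 0 < a)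
    (h : 1 / E.toReal < a) : ((1 / a : ℝ) : EReal) < E := by
  induction E using EReal.rec with
  | bot => exact absurd hE (not_le.2 (EReal.bot_lt_coe 1))
  | coe e =>
    have he : 0 < e := zero_lt_one.trans_le (by exact_mod_cast hE)
    rw [EReal.toReal_coe] at h
    exact EReal.coe_lt_coe_iff.2 ((one_div_lt he ha).1 h)
  | top => exact EReal.coe_lt_top _

end EReal

section Kappa

lemma kappaBase_nonneg (b : ℕ) (x : ℝ) : 0 ≤ kappaBase b x :=
  one_div_nonneg.2 (EReal.toReal_nonneg (zero_le_one.trans (one_le_Einf _)))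

variable {b : ℕ}

lemma kappaBase_le_of_containsPowInf {x : ℝ} {r : ℚ} (hr : 0 < (r : ℝ))
    (h : ContainsPowInf (baseDigit b x) r) : kappaBase b x ≤ 1 / r :=
  EReal.one_div_toReal_le_one_div hr (le_Einf_of_containsPowInf h)

lemma le_one_div_Einf_of_frequently {l : Filter ℝ} {w : ℕ → ℕ} {a : ℝ}
    (hw : ∀ k, ∀ᶠ z in l, baseDigit b z k = w k) (ha : ∃ᶠ z in l, kappaBase b z = a) :
    a ≤ 1 / (Einf w).toReal := by
  by_contra! hlt
  have ha0 : 0 < a := (one_div_nonneg.2 (EReal.toReal_nonneg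
    (zero_le_one.trans (one_le_Einf w)))).trans_lt hlt
  obtain ⟨r, hr, har⟩ := exists_containsPowInf_gt
    (EReal.coe_one_div_lt_of_one_div_toReal_lt (one_le_Einf w) ha0 hlt)
  have hr0 : 0 < (r : ℝ) := (one_div_pos.2 ha0).trans har
  have hkappa : ∀ᶠ z in l, kappaBase b z ≤ 1 / r :=
    (hr.eventually hw).mono fun z hz => kappaBase_le_of_containsPowInf hr0 hz
  obtain ⟨z, rfl, hz⟩ := (ha.and_eventually hkappa).exists
  exact (one_div_lt hr0 ha0 |>.2 har).not_ge hz

end Kappa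

section Digits

lemma eventually_ceil_mul_eq_left {c : ℝ} (hc : 0 < c) (x : ℝ) :
    ∀ᶠ z in 𝓝[<] x, ⌈z * c⌉ = ⌈x * c⌉ := by
  have hlow : ∀ᶠ z in 𝓝[<] x, (⌈x * c⌉ : ℝ) - 1 < z * c :=
    ((continuous_mul_const c).tendsto x).mono_left nhdsWithin_le_nhds |>.eventually_const_lt
      (by linarith [Int.ceil_lt_add_one (x * c)])
  filter_upwards [hlow, self_mem_nhdsWithin] with z hlow (hz : z < x)
  exact Int.ceil_eq_iff.2 ⟨hlow, (mul_le_mul_of_nonneg_right hz.le hc.le).trans (Int.le_ceil _)⟩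

lemma eventually_ceil_mul_eq_right {c : ℝ} (hc : 0 < c) (x : ℝ) :
    ∀ᶠ z in 𝓝[>] x, ⌈z * c⌉ = ⌊x * c⌋ + 1 := by
  have hup : ∀ᶠ z in 𝓝[>] x, z * c < (⌊x * c⌋ : ℝ) + 1 :=
    ((continuous_mul_const c).tendsto x).mono_left nhdsWithin_le_nhds |>.eventually_lt_const
      (Int.lt_floor_add_one (x * c))
  filter_upwards [hup, self_mem_nhdsWithin] with z hup (hz : x < z)
  refine Int.ceil_eq_iff.2 ⟨?_, by push_cast; exact hup.le⟩
  push_cast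
  linarith [Int.floor_le (x * c), mul_lt_mul_of_pos_right hz hc]

variable {b : ℕ}

/-- The digits of the terminating base-`b` expansion of `x`. -/
noncomputable def greedyDigit (b : ℕ) (x : ℝ) (k : ℕ) : ℕ :=
  (⌊x * b ^ (k + 1)⌋ - b * ⌊x * b ^ k⌋).toNat

lemma eventually_baseDigit_eq_left (hb : 0 < b) {x : ℝ} (hx : 0 < x) (k : ℕ) :
    ∀ᶠ z in 𝓝[<] x, baseDigit b z k = baseDigit b x k := by
  filter_upwards [eventually_ceil_mul_eq_left (c := (b : ℝ) ^ k) (by positivity) x,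
    eventually_ceil_mul_eq_left (c := (b : ℝ) ^ (k + 1)) (by positivity) x,
    Ioo_mem_nhdsLT hx] with z hk hk1 hz
  simp only [baseDigit, if_neg hz.1.not_ge, if_neg hx.not_ge, hk, hk1]

lemma eventually_baseDigit_eq_greedyDigit_right (hb : 0 < b) {x : ℝ} (hx : 0 < x) (k : ℕ) :
    ∀ᶠ z in 𝓝[>] x, baseDigit b z k = greedyDigit b x k := by
  filter_upwards [eventually_ceil_mul_eq_right (c := (b : ℝ) ^ k) (by positivity) x,
    eventually_ceil_mul_eq_right (c := (b : ℝ) ^ (k + 1)) (by positivity) x,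
    self_mem_nhdsWithin] with z hk hk1 (hz : x < z)
  simp only [baseDigit, greedyDigit, if_neg (hx.trans hz).not_ge, hk, hk1]
  congr 1
  ring

lemma one_div_Einf_greedyDigit_le_kappaBase {x : ℝ} (hx : 0 < x) :
    1 / (Einf (greedyDigit b x)).toReal ≤ kappaBase b x := by
  by_cases hadic : ∃ n : ℕ, x * (b : ℝ) ^ n ∈ Set.range ((↑) : ℤ → ℝ)
  · obtain ⟨n, m, hm⟩ := hadic
    have hfloor : ∀ i, ⌊x * (b : ℝ) ^ (n + i)⌋ = m * b ^ i := fun i => by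
      rw [pow_add, ← mul_assoc, ← hm]; exact_mod_cast Int.floor_intCast _
    have htail : ∀ k ≥ n, greedyDigit b x k = 0 := fun k hk => by
      obtain ⟨i, rfl⟩ := Nat.exists_eq_add_of_le hk
      simp only [greedyDigit, add_assoc, hfloor, pow_succ]
      ring_nf
      simp
    rw [Einf_eq_top_of_eventually_const htail]
    simpa using kappaBase_nonneg b x
  · push Not at hadic
    have hdigit : baseDigit b x = greedyDigit b x := funext fun k => by
      simp only [baseDigit, greedyDigit, if_neg hx.not_ge,
        (Int.ceil_eq_floor_add_one_iff_notMem _).2 (hadic _)]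
      congr 1
      ring
    rw [kappaBase, hdigit]

end Digits

section Ranges

variable {f : ℝ → ℝ} {x a : ℝ}

lemma leftRange_subset_range : leftRange f x ⊆ Set.range f := fun _ ha =>
  let ⟨z, _, hz⟩ := ha 1 one_pos
  ⟨z, hz⟩

lemma rightRange_subset_range : rightRange f x ⊆ Set.range f := fun _ ha =>
  let ⟨z, _, hz⟩ := ha 1 one_pos
  ⟨z, hz⟩

lemma frequently_nhdsLT_of_mem_leftRange (ha : a ∈ leftRange f x) :
    ∃ᶠ z in 𝓝[<] x, f z = a := by
  refine frequently_iff.2 fun hU => ?_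
  obtain ⟨l, hl, hsub⟩ := mem_nhdsLT_iff_exists_Ioo_subset.1 hU
  obtain ⟨z, hz, hfz⟩ := ha (x - l) (sub_pos.2 hl)
  exact ⟨z, hsub (by simpa using hz), hfz⟩

lemma frequently_nhdsGT_of_mem_rightRange (ha : a ∈ rightRange f x) :
    ∃ᶠ z in 𝓝[>] x, f z = a := by
  refine frequently_iff.2 fun hU => ?_
  obtain ⟨u, hu, hsub⟩ := mem_nhdsGT_iff_exists_Ioo_subset.1 hU
  obtain ⟨z, hz, hfz⟩ := ha (u - x) (sub_pos.2 hu)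
  exact ⟨z, hsub (by simpa using hz), hfz⟩

lemma range_kappaBase_subset_Ici (b : ℕ) : Set.range (kappaBase b) ⊆ Set.Ici 0 := by
  rintro _ ⟨z, rfl⟩
  exact kappaBase_nonneg b z

variable {b : ℕ}

lemma leftRange_kappaBase_subset_Iic (hb : 0 < b) (hx : 0 < x) :
    leftRange (kappaBase b) x ⊆ Set.Iic (kappaBase b x) := fun _ ha =>
  le_one_div_Einf_of_frequently (eventually_baseDigit_eq_left hb hx)
    (frequently_nhdsLT_of_mem_leftRange ha)

lemma rightRange_kappaBase_subset_Iic (hb : 0 < b) (hx : 0 < x) :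
    rightRange (kappaBase b) x ⊆ Set.Iic (kappaBase b x) := fun _ ha =>
  (le_one_div_Einf_of_frequently (eventually_baseDigit_eq_greedyDigit_right hb hx)
    (frequently_nhdsGT_of_mem_rightRange ha)).trans (one_div_Einf_greedyDigit_le_kappaBase hx)

lemma lt_kappaBase_of_mem_interior_leftRange (hb : 0 < b)
    (h : x ∈ interior (leftRange (kappaBase b) x)) : x < kappaBase b x := by
  have hx : 0 < x := by
    simpa using interior_mono (leftRange_subset_range.trans (range_kappaBase_subset_Ici b)) h
  simpa using interior_mono (leftRange_kappaBase_subset_Iic hb hx) h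

lemma lt_kappaBase_of_mem_interior_rightRange (hb : 0 < b)
    (h : x ∈ interior (rightRange (kappaBase b) x)) : x < kappaBase b x := by
  have hx : 0 < x := by
    simpa using interior_mono (rightRange_subset_range.trans (range_kappaBase_subset_Ici b)) h
  simpa using interior_mono (rightRange_kappaBase_subset_Iic hb hx) h

end Ranges

theorem stmt_11_general (x : ℝ)
    (h : x ∈ interior (leftRange kappa2 x) ∪ interior (rightRange kappa2 x)) :
    x < kappa2 x :=
  h.elim (lt_kappaBase_of_mem_interior_leftRange two_pos)
    (lt_kappaBase_of_mem_interior_rightRange two_pos)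

theorem stmt_11 (x : ℝ) (hx : x ∈ Set.Icc (0 : ℝ) 1)
    (h : x ∈ interior (leftRange kappa2 x) ∪ interior (rightRange kappa2 x)) :
    x < kappa2 x :=
  stmt_11_general x h
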